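/- The Shannon entropy Φ(p) = −Σⱼ pⱼ log pⱼ satisfies ∫₀¹ Φ(t·e(1) + (1−t)·ē)⁻² dt = ∞, where ē = (1/n,…,1/n) is the barycenter of the unit simplex in ℝⁿ and e(1) = (1,0,…,0). -/

import Mathlib

/-!
Near the vertex, at `t = 1 - u`, every coordinate but the first is `u / n` and the first is
`≥ 1 - u`. Since `-x log x ≤ 2√x` and `-x log x ≤ 1 - x`, the entropy is `O(√u)`, so
`Φ⁻² ≳ 1 / u`, which is not integrable at `u = 0`.
-/

open MeasureTheory Real Set

lemma Real.negMulLog_pos {x : ℝ} (h0 : 0 < x) (h1 : x < 1) : 0 < negMulLog x := by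
  simpa only [negMulLog_eq_neg, neg_pos] using mul_log_neg h0 h1

lemma Real.negMulLog_le_two_mul_sqrt {x : ℝ} (hx : 0 ≤ x) : negMulLog x ≤ 2 * √x := by
  obtain ⟨s, hs, rfl⟩ : ∃ s, 0 ≤ s ∧ s * s = x := ⟨√x, sqrt_nonneg x, mul_self_sqrt hx⟩
  rw [sqrt_mul_self hs, negMulLog_mul]
  nlinarith [negMulLog_le_one_sub_self hs]

section Entropy

variable {ι : Type*} [Fintype ι]

lemma sum_negMulLog_pos {p : ι → ℝ} (hp : ∀ j, 0 ≤ p j ∧ p j ≤ 1) {i : ι}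
    (hi : 0 < p i ∧ p i < 1) : 0 < ∑ j, negMulLog (p j) :=
  Finset.sum_pos' (fun j _ => negMulLog_nonneg (hp j).1 (hp j).2)
    ⟨i, Finset.mem_univ i, negMulLog_pos hi.1 hi.2⟩

lemma sum_negMulLog_le_of_near_vertex {p : ι → ℝ} {i₀ : ι} {u : ℝ} (hu0 : 0 ≤ u) (hu1 : u ≤ 1)
    (hi₀ : 1 - u ≤ p i₀) (hp : ∀ j, j ≠ i₀ → 0 ≤ p j ∧ p j ≤ u) :
    ∑ j, negMulLog (p j) ≤ Fintype.card ι * (2 * √u) := by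
  calc ∑ j, negMulLog (p j) ≤ ∑ _j : ι, 2 * √u := by
        refine Finset.sum_le_sum fun j _ => ?_
        by_cases hj : j = i₀
        · subst hj
          calc negMulLog (p j) ≤ 1 - p j := negMulLog_le_one_sub_self (by linarith)
            _ ≤ u := by linarith
            _ ≤ √u := (le_sqrt hu0 hu0).2 (by nlinarith)
            _ ≤ 2 * √u := by linarith [sqrt_nonneg u]
        · obtain ⟨h0, hu⟩ := hp j hj
          calc negMulLog (p j) ≤ 2 * √(p j) := negMulLog_le_two_mul_sqrt h0
            _ ≤ 2 * √u := by gcongr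
    _ = Fintype.card ι * (2 * √u) := by simp

end Entropy

lemma lintegral_Ioo_inv_sub_eq_top {a b : ℝ} (hab : a < b) :
    ∫⁻ t in Ioo a b, ENNReal.ofReal ((b - t)⁻¹) = ⊤ := by
  by_contra h
  have hint : IntegrableOn (fun t => (b - t)⁻¹) (Ioo a b) :=
    (lintegral_ofReal_ne_top_iff_integrable (by fun_prop)
      (ae_restrict_of_forall_mem measurableSet_Ioo fun t ht => inv_nonneg.2 (by linarith [ht.2]))).1 h
  have hint' : IntervalIntegrable (fun t => (t - b)⁻¹) volume a b := by
    rw [intervalIntegrable_iff_integrableOn_Ioo_of_le hab.le]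
    exact hint.neg.congr_fun (fun t _ => by rw [Pi.neg_apply, ← inv_neg, neg_sub]) measurableSet_Ioo
  simp [hab.ne, hab.le] at hint'

lemma lintegral_Ioo_eq_top_of_mul_inv_sub_le {a b c : ℝ} {f : ℝ → ℝ} (hab : a < b) (hc : 0 < c)
    (hf : ∀ t ∈ Ioo a b, c * (b - t)⁻¹ ≤ f t) :
    ∫⁻ t in Ioo a b, ENNReal.ofReal (f t) = ⊤ := by
  refine eq_top_mono
    (setLIntegral_mono' measurableSet_Ioo fun t ht => ENNReal.ofReal_le_ofReal (hf t ht)) ?_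
  simp_rw [ENNReal.ofReal_mul hc.le]
  rw [lintegral_const_mul' _ _ ENNReal.ofReal_ne_top, lintegral_Ioo_inv_sub_eq_top hab,
    ENNReal.mul_top (ENNReal.ofReal_pos.2 hc).ne']

theorem stmt_15 (n : ℕ) (hn : 2 ≤ n)
    (Φ : (Fin n → ℝ) → ℝ)
    (hΦ : ∀ p, Φ p = ∑ j, -(p j * Real.log (p j)))
    (γ : ℝ → (Fin n → ℝ))
    (hγ : ∀ t, γ t = fun (i : Fin n) =>
      t * (if (i : ℕ) = 0 then 1 else 0) + (1 - t) * ((n : ℝ)⁻¹)) :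
    ∫⁻ t in Set.Ioo (0 : ℝ) 1, ENNReal.ofReal (1 / (Φ (γ t)) ^ 2) = ⊤ := by
  have hn1 : (1 : ℝ) < n := by exact_mod_cast hn
  refine lintegral_Ioo_eq_top_of_mul_inv_sub_le zero_lt_one (c := (4 * n ^ 2)⁻¹) (by positivity)
    fun t ⟨ht0, ht1⟩ => ?_
  have hΦγ : Φ (γ t) = ∑ j, negMulLog (γ t j) := by simp only [hΦ, negMulLog_eq_neg]
  have hq : 0 < (1 - t) / n ∧ (1 - t) / n < 1 - t :=
    ⟨by positivity, div_lt_self (by linarith) hn1⟩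
  have hγ0 : γ t ⟨0, by omega⟩ = t + (1 - t) / n := by simp [hγ, div_eq_mul_inv]
  have hγj (j : Fin n) (hj : j ≠ ⟨0, by omega⟩) : γ t j = (1 - t) / n := by
    simp [hγ, div_eq_mul_inv, Fin.ext_iff.not.1 hj]
  have hpos : 0 < Φ (γ t) := by
    rw [hΦγ]
    refine sum_negMulLog_pos (fun j => ?_) (i := ⟨1, by omega⟩) ?_
    · by_cases hj : j = ⟨0, by omega⟩
      · subst hj; rw [hγ0]; constructor <;> linarith
      · rw [hγj j hj]; constructor <;> linarith
    · rw [hγj _ (by simp [Fin.ext_iff])]; constructor <;> linarith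
  have hle : Φ (γ t) ≤ n * (2 * √(1 - t)) := by
    rw [hΦγ]
    refine (sum_negMulLog_le_of_near_vertex (i₀ := ⟨0, by omega⟩) (u := 1 - t) (by linarith)
      (by linarith) (by rw [hγ0]; linarith) fun j hj => ?_).trans_eq (by simp)
    rw [hγj j hj]; constructor <;> linarith
  calc (4 * n ^ 2 : ℝ)⁻¹ * (1 - t)⁻¹ = 1 / (n * (2 * √(1 - t))) ^ 2 := by
        rw [mul_pow, mul_pow, sq_sqrt (by linarith)]; field_simp; ring
    _ ≤ 1 / Φ (γ t) ^ 2 := by gcongr
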